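/- Let k have characteristic p > 0 and let r > 0. The coalgebra structure on k[T] induces a coalgebra structure on the quotient k[T]/(T^{p^r}), and the composite k[T]_{<p^r} ⊂ k[T] → k[T]/(T^{p^r}) is an isomorphism of coalgebras. -/

import Mathlib

noncomputable section

open TensorProduct Polynomial

variable (k : Type) [Field k]

def gaComul : k[X] →ₐ[k] k[X] ⊗[k] k[X] :=
  aeval ((X : k[X]) ⊗ₜ[k] (1 : k[X]) + (1 : k[X]) ⊗ₜ[k] (X : k[X]))

def gaCounit : k[X] →ₐ[k] k := aeval 0

variable {k}

/-- coassociativity and counit laws for a coalgebra structure `(Δ, ε)` on `C` -/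
def IsCoalgebraStr {C : Type} [AddCommGroup C] [Module k C]
    (Δ : C →ₗ[k] C ⊗[k] C) (ε : C →ₗ[k] k) : Prop :=
  (∀ c, (TensorProduct.assoc k C C C) (LinearMap.rTensor C Δ (Δ c)) =
      LinearMap.lTensor C Δ (Δ c)) ∧
  (∀ c, (TensorProduct.lid k C) (LinearMap.rTensor C ε (Δ c)) = c) ∧
  (∀ c, (TensorProduct.rid k C) (LinearMap.lTensor C ε (Δ c)) = c)

variable (k)

/-- the quotient `k[T]/(T^{pʳ})`, i.e. the coordinate algebra of the Frobenius kernel. -/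
abbrev QuotT (p r : ℕ) : Type := k[X] ⧸ Ideal.span {(X : k[X]) ^ p ^ r}


/-!
In characteristic `p` the Frobenius `a ↦ a ^ p ^ r` is additive, so
`Δ (T ^ p ^ r) = (T ⊗ 1 + 1 ⊗ T) ^ p ^ r = T ^ p ^ r ⊗ 1 + 1 ⊗ T ^ p ^ r` is primitive, and
`ε (T ^ p ^ r) = 0`; hence `Δ` and `ε` descend to `k[T]/(T ^ p ^ r)`. All structure maps on the
quotient are algebra maps, so the coalgebra laws only need to be checked on the generator `T`.
Division with remainder by the monic polynomial `T ^ p ^ r` shows that the polynomials of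
degree `< p ^ r` represent each residue class exactly once.
-/

theorem isCoalgebraStr_of_algHom {A : Type} [CommRing A] [Algebra k A]
    (Δ : A →ₐ[k] A ⊗[k] A) (ε : A →ₐ[k] k)
    (h_coassoc : (Algebra.TensorProduct.assoc k k k A A A).toAlgHom.comp
      ((Algebra.TensorProduct.map Δ (.id k A)).comp Δ)
      = (Algebra.TensorProduct.map (.id k A) Δ).comp Δ)
    (h_rTensor : (Algebra.TensorProduct.map ε (.id k A)).comp Δ
      = (Algebra.TensorProduct.lid k A).symm)
    (h_lTensor : (Algebra.TensorProduct.map (.id k A) ε).comp Δ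
      = (Algebra.TensorProduct.rid k k A).symm) :
    IsCoalgebraStr Δ.toLinearMap ε.toLinearMap := by
  let := Bialgebra.ofAlgHom Δ ε h_coassoc h_rTensor h_lTensor
  exact ⟨Coalgebra.coassoc_apply (R := k),
    fun c => by
      rw [show ε.toLinearMap.rTensor A (Δ.toLinearMap c) = 1 ⊗ₜ c from
        Coalgebra.rTensor_counit_comul c]
      simp,
    fun c => by
      rw [show ε.toLinearMap.lTensor A (Δ.toLinearMap c) = c ⊗ₜ 1 from
        Coalgebra.lTensor_counit_comul c]
      simp⟩

theorem gaComul_X : gaComul k X = X ⊗ₜ 1 + 1 ⊗ₜ X := aeval_X _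

theorem gaComul_X_pow_char_pow (p : ℕ) [Fact p.Prime] [CharP k p] (n : ℕ) :
    gaComul k (X ^ p ^ n) = (X ^ p ^ n) ⊗ₜ 1 + 1 ⊗ₜ (X ^ p ^ n) := by
  have := charP_of_injective_algebraMap' k (A := k[X] ⊗[k] k[X]) p
  rw [map_pow, gaComul_X, add_pow_char_pow, Algebra.TensorProduct.tmul_pow,
    Algebra.TensorProduct.tmul_pow, one_pow]

theorem span_X_pow_le_ker_gaCounit {n : ℕ} (hn : n ≠ 0) :
    Ideal.span {X ^ n} ≤ RingHom.ker (gaCounit k) := by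
  rw [Ideal.span_singleton_le_iff_mem, RingHom.mem_ker]
  simp [gaCounit, hn]

theorem span_X_pow_char_pow_le_ker_gaComul (p : ℕ) [Fact p.Prime] [CharP k p] (n : ℕ) :
    Ideal.span {X ^ p ^ n} ≤ RingHom.ker ((Algebra.TensorProduct.map
      (Ideal.Quotient.mkₐ k (Ideal.span {X ^ p ^ n}))
      (Ideal.Quotient.mkₐ k (Ideal.span {X ^ p ^ n}))).comp (gaComul k)) := by
  rw [Ideal.span_singleton_le_iff_mem, RingHom.mem_ker]
  have hzero : Ideal.Quotient.mk (Ideal.span {X ^ p ^ n}) (X ^ p ^ n : k[X]) = 0 :=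
    Ideal.Quotient.eq_zero_iff_mem.mpr (Ideal.mem_span_singleton_self _)
  simp [gaComul_X_pow_char_pow, hzero]

theorem Polynomial.Monic.bijective_mk_degreeLT {R : Type*} [CommRing R] [Nontrivial R]
    {g : R[X]} (hg : g.Monic) :
    Function.Bijective fun f : degreeLT R g.natDegree =>
      Ideal.Quotient.mk (Ideal.span {g}) f.1 := by
  have hdeg : ∀ f : degreeLT R g.natDegree, degree f.1 < degree g := fun f => by
    rw [degree_eq_natDegree hg.ne_zero]; exact mem_degreeLT.mp f.2
  refine ⟨fun f₁ f₂ h => ?_, fun c => ?_⟩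
  · have hdvd : g ∣ f₁.1 - f₂.1 := Ideal.mem_span_singleton.mp (Ideal.Quotient.eq.mp h)
    by_contra hne
    refine hg.not_dvd_of_degree_lt (sub_ne_zero.mpr (Subtype.coe_injective.ne hne)) ?_ hdvd
    exact (degree_sub_le _ _).trans_lt (max_lt (hdeg f₁) (hdeg f₂))
  · obtain ⟨f, rfl⟩ := Ideal.Quotient.mk_surjective c
    refine ⟨⟨f %ₘ g, mem_degreeLT.mpr ?_⟩,
      Ideal.Quotient.eq.mpr (Ideal.mem_span_singleton.mpr ?_)⟩
    · rw [← degree_eq_natDegree hg.ne_zero]; exact degree_modByMonic_lt f hg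
    · exact ⟨-(f /ₘ g), by linear_combination modByMonic_add_div f g⟩

section Coideal

variable {k} {I : Ideal k[X]}
  (hΔ : I ≤ RingHom.ker ((Algebra.TensorProduct.map (Ideal.Quotient.mkₐ k I)
    (Ideal.Quotient.mkₐ k I)).comp (gaComul k)))
  (hε : I ≤ RingHom.ker (gaCounit k))

def quotComul : k[X] ⧸ I →ₐ[k] (k[X] ⧸ I) ⊗[k] (k[X] ⧸ I) :=
  Ideal.Quotient.liftₐ I _ fun _ ha => hΔ ha

def quotCounit : k[X] ⧸ I →ₐ[k] k :=
  Ideal.Quotient.liftₐ I (gaCounit k) fun _ ha => hε ha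

theorem quotComul_mk (f : k[X]) :
    quotComul hΔ (Ideal.Quotient.mk I f) =
      Algebra.TensorProduct.map (Ideal.Quotient.mkₐ k I) (Ideal.Quotient.mkₐ k I)
        (gaComul k f) :=
  rfl

theorem quotCounit_mk (f : k[X]) : quotCounit hε (Ideal.Quotient.mk I f) = gaCounit k f :=
  rfl

@[simp]
theorem quotComul_mk_X :
    quotComul hΔ (Ideal.Quotient.mk I X) =
      Ideal.Quotient.mk I X ⊗ₜ 1 + 1 ⊗ₜ Ideal.Quotient.mk I X := by
  simp [quotComul_mk, gaComul_X]

@[simp]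
theorem quotCounit_mk_X : quotCounit hε (Ideal.Quotient.mk I X) = 0 := by
  simp [quotCounit_mk, gaCounit]

theorem isCoalgebraStr_quot :
    IsCoalgebraStr (quotComul hΔ).toLinearMap (quotCounit hε).toLinearMap := by
  apply isCoalgebraStr_of_algHom <;> apply Ideal.Quotient.algHom_ext <;> apply Polynomial.algHom_ext
  · simp [add_tmul, tmul_add, Algebra.TensorProduct.one_def]
    abel
  · simp
  · simp

end Coideal

theorem statement6 (p : ℕ) [Fact p.Prime] [CharP k p] (r : ℕ) :
    ∃ (Δq : QuotT k p r →ₗ[k] QuotT k p r ⊗[k] QuotT k p r)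
      (εq : QuotT k p r →ₗ[k] k),
      (∀ f : k[X],
        Δq (Ideal.Quotient.mk (Ideal.span {(X : k[X]) ^ p ^ r}) f) =
          TensorProduct.map
            (Ideal.Quotient.mkₐ k (Ideal.span {(X : k[X]) ^ p ^ r})).toLinearMap
            (Ideal.Quotient.mkₐ k (Ideal.span {(X : k[X]) ^ p ^ r})).toLinearMap
            (gaComul k f)) ∧
      (∀ f : k[X],
        εq (Ideal.Quotient.mk (Ideal.span {(X : k[X]) ^ p ^ r}) f) = gaCounit k f) ∧
      IsCoalgebraStr Δq εq ∧
      Function.Bijective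
        (fun f : Polynomial.degreeLT k (p ^ r) =>
          Ideal.Quotient.mk (Ideal.span {(X : k[X]) ^ p ^ r}) (f : k[X])) := by
  have hΔ := span_X_pow_char_pow_le_ker_gaComul k p r
  have hε := span_X_pow_le_ker_gaCounit k (pow_ne_zero r (Fact.out : p.Prime).ne_zero)
  refine ⟨(quotComul hΔ).toLinearMap, (quotCounit hε).toLinearMap, fun f => ?_,
    quotCounit_mk hε, isCoalgebraStr_quot hΔ hε, ?_⟩
  · exact LinearMap.congr_fun (Algebra.TensorProduct.toLinearMap_map _ _) (gaComul k f)
  · have h := (monic_X_pow (R := k) (p ^ r)).bijective_mk_degreeLT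
    rwa [natDegree_X_pow] at h
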